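/- There exist an integer n ≥ 2, an open set Ω ⊆ ℝⁿ, a smooth function p : Ω × Ω → ℝ satisfying (P), and a function u : Ω → ℝ, smooth on Ω \ {0}, with ∫_Ω |u(x)|^{p̄(x)} dx < ∞ and ∫_{Ω\{0}} |∇u(x)|^{p̄(x)} dx < ∞ (so u ∈ W^{1,p̄(·)}(Ω)), for which the equality lim_{s↗1} s(1−s) ∫_Ω ∫_Ω |u(x)−u(y)|^{p(x,y)} / |x−y|^{n+s·p(x,y)} dy dx = ∫_Ω K_{n,p̄(x)} |∇u(x)|^{p̄(x)} dx fails: the right-hand side is finite while the left-hand side equals +∞ for every s ∈ (0,1). -/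

import Mathlib

open MeasureTheory Filter Metric Set
open scoped ENNReal Topology

/-- The constant `K_{n,p} = 2 π^{(n-1)/2} Γ((p+1)/2) / (p Γ((n+p)/2))`. -/
noncomputable def Kconst (n : ℕ) (q : ℝ) : ℝ :=
  2 * Real.pi ^ (((n : ℝ) - 1) / 2) * Real.Gamma ((q + 1) / 2) /
    (q * Real.Gamma (((n : ℝ) + q) / 2))

/-- The modular `ϱ_{s,p}(u) = s(1-s) ∫_Ω ∫_Ω |u(x)-u(y)|^{p(x,y)} / |x-y|^{n+s p(x,y)} dy dx`,
as a Lebesgue integral with values in `[0,∞]`. -/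
noncomputable def varModular (n : ℕ) (Ω : Set (EuclideanSpace ℝ (Fin n)))
    (p : EuclideanSpace ℝ (Fin n) → EuclideanSpace ℝ (Fin n) → ℝ) (s : ℝ)
    (u : EuclideanSpace ℝ (Fin n) → ℝ) : ℝ≥0∞ :=
  ENNReal.ofReal (s * (1 - s)) *
    ∫⁻ x in Ω, ∫⁻ y in Ω,
      ENNReal.ofReal (|u x - u y| ^ p x y / ‖x - y‖ ^ ((n : ℝ) + s * p x y))


/-!
Take `n = 2`, `Ω = B(0, 1/2)`, `u(x) = |x|^(-4/5)` and `p(x, y) = 11/10 + 50 |x - y|²`. On the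
diagonal `p̄ ≡ 11/10`, so `|u|^p̄ ≈ |x|^(-22/25)` and `|∇u|^p̄ ≲ |x|^(-99/50)` are integrable in the
plane, both exponents being below `2`. Off the diagonal `p` is large: for `2/5 < |x| < 1/2` and
`|y| < 1/100` we have `p(x, y) ≥ 5`, and the integrand of the modular is at least
`(|y|^(-2/5))^5 = |y|^(-2)`, which is not integrable at the origin of `ℝ²`. So the inner integral
is infinite on an annulus of positive measure.
-/

section RadialPower

variable {E : Type*} [NormedAddCommGroup E] [NormedSpace ℝ E] [FiniteDimensional ℝ E]
  [MeasurableSpace E] [BorelSpace E] {μ : Measure E} [μ.IsAddHaarMeasure]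

theorem setLIntegral_ball_lt_top_of_le_norm_rpow (hd : 1 ≤ Module.finrank ℝ E)
    {g : E → ℝ≥0∞} {C α r : ℝ} (hα : α < Module.finrank ℝ E)
    (hg : ∀ x ∈ ball (0 : E) r, x ≠ 0 → g x ≤ ENNReal.ofReal (C * ‖x‖ ^ (-α))) :
    ∫⁻ x in ball (0 : E) r, g x ∂μ < ⊤ := by
  have : Nontrivial E := Module.nontrivial_of_finrank_pos (R := ℝ) (by omega)
  have hbound : ∀ᵐ x ∂μ.restrict (ball 0 r), g x ≤ ENNReal.ofReal (C * ‖x‖ ^ (-α)) := by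
    filter_upwards [ae_restrict_mem measurableSet_ball,
      ae_restrict_of_ae (measure_eq_zero_iff_ae_notMem.1 (measure_singleton (μ := μ) (0 : E)))]
      with x hx hx0
    exact hg x hx hx0
  have hint : IntegrableOn (fun x : E ↦ C * ‖x‖ ^ (-α)) (ball 0 r) μ := by
    refine integrableOn_ball_of_norm_le_rpow (C := |C|) hd hα (ae_of_all _ fun x ↦ ?_) ?_
    · rw [norm_mul, Real.norm_eq_abs, Real.norm_of_nonneg (by positivity)]
    · exact ((measurable_norm.pow_const _).const_mul C).aestronglyMeasurable
  exact (lintegral_mono_ae hbound).trans_lt hint.setLIntegral_lt_top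

theorem setLIntegral_ball_norm_rpow_neg_finrank_eq_top (hd : 1 ≤ Module.finrank ℝ E) {r : ℝ}
    (hr : 0 < r) :
    ∫⁻ x in ball (0 : E) r, ENNReal.ofReal (‖x‖ ^ (-(Module.finrank ℝ E : ℝ))) ∂μ = ⊤ := by
  have : Nontrivial E := Module.nontrivial_of_finrank_pos (R := ℝ) (by omega)
  set d := Module.finrank ℝ E
  by_contra hfin
  have hint : IntegrableOn (fun x : E ↦ ‖x‖ ^ (-(d : ℝ))) (ball 0 r) μ :=
    (lintegral_ofReal_ne_top_iff_integrable (measurable_norm.pow_const _).aestronglyMeasurable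
      (ae_of_all _ fun x ↦ by positivity)).1 hfin
  have hradial : IntegrableOn (fun y : ℝ ↦ y ^ (d - 1) • y ^ (-(d : ℝ))) (Ioo 0 r) :=
    (integrableOn_fun_norm_addHaar μ).1 hint
  have hinv : IntegrableOn (fun y : ℝ ↦ y ^ (-1 : ℝ)) (Ioo 0 r) := by
    refine hradial.congr_fun (fun y hy ↦ ?_) measurableSet_Ioo
    dsimp only
    rw [smul_eq_mul, ← Real.rpow_natCast, ← Real.rpow_add hy.1, Nat.cast_sub hd]
    ring_nf
  exact lt_irrefl _ ((intervalIntegral.integrableOn_Ioo_rpow_iff hr).1 hinv)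

end RadialPower

theorem norm_gradient_norm_rpow_le {E : Type*} [NormedAddCommGroup E] [InnerProductSpace ℝ E]
    [CompleteSpace E] {x : E} (hx : x ≠ 0) (a : ℝ) :
    ‖gradient (fun y : E ↦ ‖y‖ ^ a) x‖ ≤ |a| * ‖x‖ ^ (a - 1) := by
  have hnorm : HasFDerivAt (fun y : E ↦ ‖y‖) (fderiv ℝ (fun y : E ↦ ‖y‖) x) x :=
    ((contDiffAt_norm ℝ hx).differentiableAt one_ne_zero).hasFDerivAt
  have hlip : ‖fderiv ℝ (fun y : E ↦ ‖y‖) x‖ ≤ 1 := by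
    simpa using norm_fderiv_le_of_lipschitz ℝ (x₀ := x) lipschitzWith_one_norm
  rw [gradient, LinearIsometryEquiv.norm_map,
    (hnorm.rpow_const (Or.inl (norm_ne_zero_iff.2 hx))).fderiv, norm_smul, Real.norm_eq_abs,
    abs_mul, abs_of_nonneg (by positivity : (0 : ℝ) ≤ ‖x‖ ^ (a - 1))]
  exact mul_le_of_le_one_right (by positivity) hlip

theorem contDiffOn_norm_rpow {E : Type*} [NormedAddCommGroup E] [InnerProductSpace ℝ E]
    {n : WithTop ℕ∞} (a : ℝ) : ContDiffOn ℝ n (fun y : E ↦ ‖y‖ ^ a) {0}ᶜ := fun _ hx ↦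
  ((contDiffAt_norm ℝ hx).rpow_const_of_ne (norm_ne_zero_iff.2 hx)).contDiffWithinAt

theorem setLIntegral_eq_top_of_isOpen {α : Type*} [TopologicalSpace α] [MeasurableSpace α]
    [OpensMeasurableSpace α] {μ : Measure α} [μ.IsOpenPosMeasure] {f : α → ℝ≥0∞} {s U : Set α}
    (hU : IsOpen U) (hUne : U.Nonempty) (hUs : U ⊆ s) (hf : ∀ x ∈ U, f x = ⊤) :
    ∫⁻ x in s, f x ∂μ = ⊤ := by
  refine top_le_iff.1 ?_
  calc ⊤ = ∫⁻ _ in U, ⊤ ∂μ := by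
        rw [setLIntegral_const, ENNReal.top_mul (hU.measure_ne_zero μ hUne)]
    _ = ∫⁻ x in U, f x ∂μ := (setLIntegral_congr_fun hU.measurableSet fun x hx ↦ hf x hx).symm
    _ ≤ ∫⁻ x in s, f x ∂μ := lintegral_mono_set hUs

namespace BBMCounterexample

local notation "ℝ²" => EuclideanSpace ℝ (Fin 2)

noncomputable def exponent (x y : ℝ²) : ℝ := 11 / 10 + 50 * ‖x - y‖ ^ 2

noncomputable def profile (x : ℝ²) : ℝ := ‖x‖ ^ (-(4 / 5) : ℝ)

@[simp]
theorem exponent_self (x : ℝ²) : exponent x x = 11 / 10 := by simp [exponent]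

theorem contDiff_exponent : ContDiff ℝ (⊤ : ℕ∞) (Function.uncurry exponent) :=
  contDiff_const.add (contDiff_const.mul ((contDiff_fst.sub contDiff_snd).norm_sq ℝ))

theorem exponent_mem_Icc {x y : ℝ²} (hx : ‖x‖ < 1 / 2) (hy : ‖y‖ < 1 / 2) :
    11 / 10 ≤ exponent x y ∧ exponent x y ≤ 52 := by
  have hxy : ‖x - y‖ ≤ 1 := by linarith [norm_sub_le x y]
  unfold exponent
  constructor <;> nlinarith [norm_nonneg (x - y)]

theorem five_le_exponent {x y : ℝ²} (hx : 2 / 5 < ‖x‖) (hy : ‖y‖ < 1 / 100) :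
    5 ≤ exponent x y := by
  have hxy : 39 / 100 ≤ ‖x - y‖ := by linarith [norm_sub_norm_le x y]
  unfold exponent
  nlinarith

theorem contDiffOn_profile {n : WithTop ℕ∞} : ContDiffOn ℝ n profile {0}ᶜ :=
  contDiffOn_norm_rpow _

theorem abs_profile_rpow (x : ℝ²) : |profile x| ^ (11 / 10 : ℝ) = ‖x‖ ^ (-(22 / 25) : ℝ) := by
  rw [profile, abs_of_nonneg (by positivity), ← Real.rpow_mul (norm_nonneg x)]
  norm_num

theorem profile_le_three {x : ℝ²} (hx : 2 / 5 < ‖x‖) : profile x ≤ 3 := by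
  have h5 : profile x ^ 5 = (‖x‖ ^ 4)⁻¹ := by
    rw [profile, ← Real.rpow_mul_natCast (norm_nonneg x), ← Real.rpow_natCast,
      ← Real.rpow_neg (norm_nonneg x)]
    norm_num
  have : (‖x‖ ^ 4)⁻¹ ≤ 3 ^ 5 := by
    rw [inv_le_comm₀ (by positivity) (by positivity)]
    nlinarith [pow_le_pow_left₀ (by norm_num) hx.le 4]
  exact le_of_pow_le_pow_left₀ (by norm_num) (by norm_num) (h5 ▸ this)

theorem rpow_neg_two_le_modular_integrand {s : ℝ} (hs : 0 < s) {x y : ℝ²} (hx₁ : 2 / 5 < ‖x‖)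
    (hx₂ : ‖x‖ < 1 / 2) (hy : ‖y‖ < 1 / 100) :
    ‖y‖ ^ (-2 : ℝ) ≤ |profile x - profile y| ^ exponent x y / ‖x - y‖ ^ (2 + s * exponent x y) := by
  rcases eq_or_ne y 0 with rfl | hy0
  · rw [norm_zero, Real.zero_rpow (by norm_num)]
    positivity
  set t := ‖y‖ ^ (-(2 / 5) : ℝ) with ht
  have ht5 : t ^ 5 = ‖y‖ ^ (-2 : ℝ) := by
    rw [ht, ← Real.rpow_mul_natCast (norm_nonneg y)]
    norm_num
  have ht3 : 3 ≤ t := by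
    have : (3 : ℝ) ^ 5 ≤ (‖y‖ ^ 2)⁻¹ := by
      rw [le_inv_comm₀ (by norm_num) (by positivity)]
      nlinarith [norm_nonneg y]
    have hy2 : ‖y‖ ^ (-2 : ℝ) = (‖y‖ ^ 2)⁻¹ := by
      rw [Real.rpow_neg (norm_nonneg y), Real.rpow_two]
    rw [← hy2, ← ht5] at this
    exact le_of_pow_le_pow_left₀ (by norm_num) (by positivity) this
  have hbase : t ≤ |profile x - profile y| := by
    have hty : profile y = t ^ 2 := by
      rw [profile, ht, ← Real.rpow_mul_natCast (norm_nonneg y)]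
      norm_num
    rw [abs_sub_comm, hty]
    nlinarith [profile_le_three hx₁, le_abs_self (t ^ 2 - profile x)]
  have hp := five_le_exponent hx₁ hy
  have hnum : ‖y‖ ^ (-2 : ℝ) ≤ |profile x - profile y| ^ exponent x y :=
    calc ‖y‖ ^ (-2 : ℝ) = t ^ (5 : ℝ) := by rw [← ht5, ← Real.rpow_natCast, Nat.cast_ofNat]
      _ ≤ t ^ exponent x y := Real.rpow_le_rpow_of_exponent_le (by linarith) hp
      _ ≤ |profile x - profile y| ^ exponent x y :=
        Real.rpow_le_rpow (by positivity) hbase (by linarith)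
  have hxy₀ : 0 < ‖x - y‖ := by linarith [norm_sub_norm_le x y]
  have hxy₁ : ‖x - y‖ ≤ 1 := by linarith [norm_sub_le x y]
  refine hnum.trans (le_div_self (by positivity) (by positivity) ?_)
  exact Real.rpow_le_one hxy₀.le hxy₁ (by positivity)

theorem norm_gradient_profile_rpow_le {x : ℝ²} (hx : x ≠ 0) :
    ‖gradient profile x‖ ^ (11 / 10 : ℝ) ≤ ‖x‖ ^ (-(99 / 50) : ℝ) :=
  calc ‖gradient profile x‖ ^ (11 / 10 : ℝ)
      ≤ (‖x‖ ^ (-(9 / 5) : ℝ)) ^ (11 / 10 : ℝ) := by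
        refine Real.rpow_le_rpow (norm_nonneg _) ?_ (by norm_num)
        refine (norm_gradient_norm_rpow_le hx _).trans ?_
        norm_num
        exact mul_le_of_le_one_left (by positivity) (by norm_num)
    _ = ‖x‖ ^ (-(99 / 50) : ℝ) := by
        rw [← Real.rpow_mul (norm_nonneg x)]
        norm_num

theorem lintegral_ball_norm_rpow_neg_two_eq_top :
    ∫⁻ y in ball (0 : ℝ²) (1 / 100), ENNReal.ofReal (‖y‖ ^ (-2 : ℝ)) = ⊤ := by
  simpa using setLIntegral_ball_norm_rpow_neg_finrank_eq_top (μ := volume)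
    (by simp : 1 ≤ Module.finrank ℝ ℝ²) (by norm_num : (0 : ℝ) < 1 / 100)

theorem varModular_eq_top {s : ℝ} (hs : s ∈ Ioo 0 1) :
    varModular 2 (ball 0 (1 / 2)) exponent s profile = ⊤ := by
  have hinner : ∀ x : ℝ², 2 / 5 < ‖x‖ → ‖x‖ < 1 / 2 → ∫⁻ y in ball 0 (1 / 2),
      ENNReal.ofReal (|profile x - profile y| ^ exponent x y /
        ‖x - y‖ ^ (2 + s * exponent x y)) = ⊤ := by
    intro x hx₁ hx₂
    refine top_le_iff.1 ?_
    calc ⊤ = ∫⁻ y in ball (0 : ℝ²) (1 / 100), ENNReal.ofReal (‖y‖ ^ (-2 : ℝ)) :=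
          lintegral_ball_norm_rpow_neg_two_eq_top.symm
      _ ≤ ∫⁻ y in ball 0 (1 / 100), ENNReal.ofReal (|profile x - profile y| ^ exponent x y /
            ‖x - y‖ ^ (2 + s * exponent x y)) :=
          setLIntegral_mono' measurableSet_ball fun y hy ↦ ENNReal.ofReal_le_ofReal
            (rpow_neg_two_le_modular_integrand hs.1 hx₁ hx₂ (mem_ball_zero_iff.1 hy))
      _ ≤ _ := lintegral_mono_set (ball_subset_ball (by norm_num))
  have hannulus : {x : ℝ² | 2 / 5 < ‖x‖ ∧ ‖x‖ < 1 / 2}.Nonempty := by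
    obtain ⟨x, hx⟩ := exists_norm_eq ℝ² (by norm_num : (0 : ℝ) ≤ 9 / 20)
    exact ⟨x, by norm_num [hx]⟩
  have hopen : IsOpen {x : ℝ² | 2 / 5 < ‖x‖ ∧ ‖x‖ < 1 / 2} :=
    (isOpen_lt continuous_const continuous_norm).inter (isOpen_lt continuous_norm continuous_const)
  have houter := setLIntegral_eq_top_of_isOpen (μ := volume) hopen hannulus (fun x hx ↦ mem_ball_zero_iff.2 hx.2) fun x hx ↦ hinner x hx.1 hx.2
  rw [varModular, Nat.cast_ofNat, houter,
    ENNReal.mul_top (ENNReal.ofReal_pos.2 (mul_pos hs.1 (sub_pos.2 hs.2))).ne']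

theorem lintegral_abs_profile_rpow_lt_top :
    ∫⁻ x in ball (0 : ℝ²) (1 / 2), ENNReal.ofReal (|profile x| ^ (11 / 10 : ℝ)) < ⊤ := by
  simp only [abs_profile_rpow]
  exact setLIntegral_ball_lt_top_of_le_norm_rpow (C := 1) (α := 22 / 25) (by simp)
    (by norm_num) fun x _ _ ↦ by rw [one_mul]

theorem lintegral_mul_norm_gradient_profile_rpow_lt_top (c : ℝ) :
    ∫⁻ x in ball (0 : ℝ²) (1 / 2),
      ENNReal.ofReal (c * ‖gradient profile x‖ ^ (11 / 10 : ℝ)) < ⊤ := by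
  refine setLIntegral_ball_lt_top_of_le_norm_rpow (C := |c|) (α := 99 / 50) (by simp)
    (by norm_num) fun x _ hx ↦ ENNReal.ofReal_le_ofReal ?_
  exact mul_le_mul (le_abs_self c) (norm_gradient_profile_rpow_le hx) (by positivity)
    (abs_nonneg c)

end BBMCounterexample

open BBMCounterexample

/-- **Corollary 1.3 (failure of the BBM equality)**: there exist `n ≥ 2`, an open `Ω ⊆ ℝⁿ`,
a smooth exponent `p` satisfying (P) and `u ∈ W^{1,p̄(·)}(Ω)` such that
`∫_Ω K_{n,p̄(x)} |∇u(x)|^{p̄(x)} dx` is finite while the modular is `+∞` for every `s ∈ (0,1)`. -/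
theorem bbm_equality_fails :
    ∃ (n : ℕ), 2 ≤ n ∧
    ∃ Ω : Set (EuclideanSpace ℝ (Fin n)), IsOpen Ω ∧
    ∃ p : EuclideanSpace ℝ (Fin n) → EuclideanSpace ℝ (Fin n) → ℝ,
      ContDiff ℝ (⊤ : ℕ∞) (Function.uncurry p) ∧
      (∃ pm pp : ℝ, 1 < pm ∧ ∀ x ∈ Ω, ∀ y ∈ Ω, pm ≤ p x y ∧ p x y ≤ pp) ∧
      ∃ u : EuclideanSpace ℝ (Fin n) → ℝ,
        ContDiffOn ℝ (⊤ : ℕ∞) u (Ω \ {0}) ∧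
        (∫⁻ x in Ω, ENNReal.ofReal (|u x| ^ p x x)) < ⊤ ∧
        (∫⁻ x in Ω \ {0}, ENNReal.ofReal (‖gradient u x‖ ^ p x x)) < ⊤ ∧
        (∫⁻ x in Ω, ENNReal.ofReal (Kconst n (p x x) * ‖gradient u x‖ ^ p x x)) < ⊤ ∧
        ∀ s ∈ Set.Ioo (0 : ℝ) 1, varModular n Ω p s u = ⊤ := by
  refine ⟨2, le_rfl, ball 0 (1 / 2), isOpen_ball, exponent, contDiff_exponent,
    ⟨11 / 10, 52, by norm_num, fun x hx y hy ↦
      exponent_mem_Icc (mem_ball_zero_iff.1 hx) (mem_ball_zero_iff.1 hy)⟩,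
    profile, contDiffOn_profile.mono fun _ hx ↦ hx.2, ?_, ?_, ?_, fun _ ↦ varModular_eq_top⟩ <;>
    simp only [exponent_self]
  · exact lintegral_abs_profile_rpow_lt_top
  · exact (lintegral_mono_set sdiff_subset).trans_lt
      (by simpa using lintegral_mul_norm_gradient_profile_rpow_lt_top 1)
  · exact lintegral_mul_norm_gradient_profile_rpow_lt_top _
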